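/- arXiv:1102.5538 — 5 statements merged into one kernel-verified Lean document; each statement's English description precedes it below -/
import Mathlib

section
/- For every real ε with 0 < ε < 1 and all integers m ≥ 2 and n ≥ 1, setting d = ⌈(log₂ m)/ε⌉ and s = ⌈100·n·(log₂ m)/ε²⌉, more than half of all functions f : Fin m → Fin d → Fin s are (m,s,d,n,ε)-expanders; that is, the number of f such that every A ⊆ Fin m with |A| ≤ n satisfies |Γ(A)| ≥ (1−ε)·d·|A| exceeds s^{m·d}/2. -/
/-- `nbr f v` : the set of right-neighbors of a left vertex `v` in the
left-`d`-regular bipartite multigraph encoded by `f`. -/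
def nbr {m d s : ℕ} (f : Fin m → Fin d → Fin s) (v : Fin m) : Finset (Fin s) :=
  Finset.image (f v) Finset.univ

/-- `nbrs f A` : the set of right-neighbors of a set `A` of left vertices. -/
def nbrs {m d s : ℕ} (f : Fin m → Fin d → Fin s) (A : Finset (Fin m)) : Finset (Fin s) :=
  A.biUnion (nbr f)

/-- `f` is an `(m,s,d,k,δ)`-expander: every `A` with `|A| ≤ k` has
at least `(1-δ)·d·|A|` neighbors. -/
def IsExpander {m d s : ℕ} (f : Fin m → Fin d → Fin s) (k : ℕ) (δ : ℝ) : Prop :=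
  ∀ A : Finset (Fin m), A.card ≤ k → (1 - δ) * d * A.card ≤ ((nbrs f A).card : ℝ)

/-!
If `f` is not an expander, then for some set `A` of `a ≤ n` left vertices the `a d` edge slots of
`A` hit at most `a d - R` right vertices, where `R = ⌊ε a d⌋ + 1`. So there are `R` slots whose
values repeat at the remaining slots of `A`, and `f` is pinned down by these `R` slots, a pointer
from each of them to a remaining slot with the same value, and the values of `f` elsewhere: at most
`C(ad, R) (ad)^R s^(md - R)` functions. Since `R! ≥ (R/3)^R` and `50 (ad)² ≤ R s`, this is at most
`(3/50)^R s^(md)`, and the `C(m, a) ≤ m^a ≤ 2^R` choices of `A` cost at most another `2^R`.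
Summing `(3/25)^a` over `a ≥ 1` bounds the proportion of non-expanders by `3/22 < 1/2`.
-/

open Finset

section FunctionsWithSmallImage

variable {α β : Type*} [DecidableEq α] [DecidableEq β]

theorem exists_powersetCard_forall_mem_image_sdiff {g : α → β} {S : Finset α} {r : ℕ}
    (h : #(S.image g) + r ≤ #S) :
    ∃ R ∈ S.powersetCard r, ∀ p ∈ R, g p ∈ (S \ R).image g := by
  obtain ⟨U, hUS, hUinj, hUimg⟩ :=
    exists_subset_injOn_image_eq_of_surjOn (S : Set α) (S.image g)
      (by rw [coe_image]; exact Set.surjOn_image g _)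
  have hU : #U = #(S.image g) := by rw [← hUimg, card_image_of_injOn hUinj]
  obtain ⟨R, hRsub, hRcard⟩ := exists_subset_card_eq (s := S \ U) (n := r) (by
    rw [card_sdiff_of_subset (coe_subset.1 hUS)]; omega)
  refine ⟨R, mem_powersetCard.2 ⟨hRsub.trans sdiff_subset, hRcard⟩, fun p hp => ?_⟩
  have hUSR : U ⊆ S \ R := fun q hq =>
    mem_sdiff.2 ⟨coe_subset.1 hUS hq, fun hqR => (mem_sdiff.1 (hRsub hqR)).2 hq⟩
  have : g p ∈ U.image g := hUimg ▸ mem_image_of_mem g (mem_sdiff.1 (hRsub hp)).1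
  exact image_subset_image hUSR this

theorem card_filter_forall_mem_image_le [Fintype α] [Fintype β] [Nonempty β] {R T : Finset α}
    (hRT : Disjoint R T) :
    #{g : α → β | ∀ p ∈ R, g p ∈ T.image g} ≤
      #T ^ #R * Fintype.card β ^ (Fintype.card α - #R) := by
  obtain ⟨z⟩ := ‹Nonempty β›
  -- `g = h ∘ σ`, where `σ` sends each `p ∈ R` to a point of `T` with the same value and `h`
  -- forgets the values on `R`
  let pointers := Fintype.piFinset fun p => if p ∈ R then T else {p}
  let values := Fintype.piFinset fun p => if p ∈ R then {z} else (univ : Finset β)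
  have hsub : ({g | ∀ p ∈ R, g p ∈ T.image g} : Finset (α → β)) ⊆
      (pointers ×ˢ values).image fun σh => σh.2 ∘ σh.1 := by
    intro g hg
    simp only [mem_filter, mem_univ, true_and, mem_image] at hg
    choose σ hσT hσ using hg
    refine mem_image.2 ⟨(fun p => if hp : p ∈ R then σ p hp else p,
      fun q => if q ∈ R then z else g q), ?_, funext fun p => ?_⟩
    · simp only [mem_product, pointers, values, Fintype.mem_piFinset]
      constructor <;> intro p <;> by_cases hp : p ∈ R <;> simp [hp, hσT]
    · by_cases hp : p ∈ R
      · have : σ p hp ∉ R := disjoint_right.1 hRT (hσT p hp)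
        simp [hp, this, hσ]
      · simp [hp]
  calc _ ≤ #((pointers ×ˢ values).image fun σh => σh.2 ∘ σh.1) := card_le_card hsub
    _ ≤ #(pointers ×ˢ values) := card_image_le
    _ = _ := by
      simp only [card_product, pointers, values, Fintype.card_piFinset, apply_ite card,
        card_singleton, card_univ, prod_ite, prod_const, one_pow, mul_one, one_mul]
      have hR : ({x | x ∈ R} : Finset α) = R := by ext; simp
      have hRc : #({x | x ∉ R} : Finset α) = Fintype.card α - #R := by
        rw [← card_compl]; congr 1; ext; simp
      rw [hR, hRc]

theorem card_filter_card_image_add_le [Fintype α] [Fintype β] [Nonempty β]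
    (S : Finset α) (r : ℕ) :
    #{g : α → β | #(S.image g) + r ≤ #S} ≤
      (#S).choose r * (#S ^ r * Fintype.card β ^ (Fintype.card α - r)) := by
  have hsub : ({g | #(S.image g) + r ≤ #S} : Finset (α → β)) ⊆
      (S.powersetCard r).biUnion fun R => {g | ∀ p ∈ R, g p ∈ (S \ R).image g} := by
    intro g hg
    obtain ⟨R, hR, hRg⟩ := exists_powersetCard_forall_mem_image_sdiff (mem_filter.1 hg).2
    exact mem_biUnion.2 ⟨R, hR, mem_filter.2 ⟨mem_univ g, hRg⟩⟩
  refine (card_le_card hsub).trans ?_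
  calc _ ≤ ∑ R ∈ S.powersetCard r, #{g : α → β | ∀ p ∈ R, g p ∈ (S \ R).image g} :=
      card_biUnion_le
    _ ≤ ∑ R ∈ S.powersetCard r, #S ^ r * Fintype.card β ^ (Fintype.card α - r) := by
      refine sum_le_sum fun R hR => ?_
      obtain ⟨-, hRcard⟩ := mem_powersetCard.1 hR
      calc _ ≤ #(S \ R) ^ #R * Fintype.card β ^ (Fintype.card α - #R) :=
            card_filter_forall_mem_image_le disjoint_sdiff
        _ ≤ _ := by
          rw [hRcard]
          gcongr
          exact sdiff_subset
    _ = _ := by simp only [sum_const, card_powersetCard, smul_eq_mul]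

end FunctionsWithSmallImage

open Nat in
theorem div_three_pow_le_factorial (n : ℕ) : ((n : ℝ) / 3) ^ n ≤ n ! := by
  have hexp : (n : ℝ) ^ n / n ! ≤ 3 ^ n :=
    calc _ ≤ Real.exp n := Real.pow_div_factorial_le_exp _ n.cast_nonneg n
      _ = Real.exp 1 ^ n := by rw [← Real.exp_nat_mul, mul_one]
      _ ≤ 3 ^ n := by gcongr; linarith [Real.exp_one_lt_d9]
  rw [div_pow, div_le_iff₀ (by positivity)]
  rwa [div_le_iff₀ (by positivity), mul_comm] at hexp

theorem choose_le_three_mul_div_pow (N R : ℕ) : (N.choose R : ℝ) ≤ (3 * N / R) ^ R := by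
  rcases R.eq_zero_or_pos with rfl | hR
  · simp
  calc (N.choose R : ℝ) ≤ N ^ R / R.factorial := Nat.choose_le_pow_div R N
    _ ≤ N ^ R / ((R : ℝ) / 3) ^ R := by
      gcongr
      exact div_three_pow_le_factorial R
    _ = (3 * N / R) ^ R := by rw [← div_pow]; congr 1; field_simp

theorem choose_mul_pow_mul_pow_sub_le {N R s M : ℕ} (hs : 0 < s) (hNM : N ≤ M)
    (h : 50 * N * N ≤ R * s) :
    ((N.choose R * (N ^ R * s ^ (M - R)) : ℕ) : ℝ) ≤ (3 / 50) ^ R * s ^ M := by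
  rcases lt_or_ge N R with hNR | hRN
  · rw [Nat.choose_eq_zero_of_lt hNR, zero_mul, Nat.cast_zero]
    positivity
  have hbase : 3 * N / R * N / s ≤ (3 / 50 : ℝ) := by
    rcases R.eq_zero_or_pos with rfl | hR
    · norm_num
    rw [div_le_iff₀ (by positivity), div_mul_eq_mul_div, div_le_iff₀ (by positivity)]
    have : (50 * N * N : ℝ) ≤ R * s := by exact_mod_cast h
    nlinarith
  have hsplit : (s : ℝ) ^ M = s ^ (M - R) * s ^ R := by
    rw [← pow_add, Nat.sub_add_cancel (hRN.trans hNM)]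
  push_cast
  calc (N.choose R : ℝ) * (N ^ R * s ^ (M - R))
      ≤ (3 * N / R) ^ R * (N ^ R * s ^ (M - R)) := by
        gcongr
        exact choose_le_three_mul_div_pow N R
    _ = (3 * N / R * N / s) ^ R * s ^ M := by
        rw [hsplit, div_pow (3 * N / R * N : ℝ), div_mul_eq_mul_div, eq_div_iff (by positivity),
          mul_pow]
        ring
    _ ≤ (3 / 50) ^ R * s ^ M := by gcongr

theorem pow_le_two_pow_of_logb_mul_le {m a R : ℕ} (hm : 0 < m)
    (h : Real.logb 2 m * a ≤ R) : (m : ℝ) ^ a ≤ 2 ^ R := by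
  calc (m : ℝ) ^ a = (2 : ℝ) ^ (Real.logb 2 m * a) := by
        rw [Real.rpow_mul zero_le_two, Real.rpow_logb zero_lt_two (by norm_num) (by positivity),
          Real.rpow_natCast]
    _ ≤ (2 : ℝ) ^ (R : ℝ) := Real.rpow_le_rpow_of_exponent_le one_le_two h
    _ = 2 ^ R := Real.rpow_natCast 2 R

theorem le_mul_ceil_div {ε : ℝ} (L : ℝ) (hε : 0 < ε) : L ≤ ε * ⌈L / ε⌉₊ := by
  rw [← div_le_iff₀' hε]
  exact Nat.le_ceil _

theorem mul_ceil_div_le {ε L : ℝ} (hε : 0 < ε) (hεL : ε ≤ L) : ε * ⌈L / ε⌉₊ ≤ 2 * L :=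
  calc ε * ⌈L / ε⌉₊ ≤ ε * (L / ε + 1) := by
        gcongr
        exact (Nat.ceil_lt_add_one (div_nonneg (hε.le.trans hεL) hε.le)).le
    _ = L + ε := by field_simp
    _ ≤ 2 * L := by linarith

theorem fifty_mul_sq_le {ε L : ℝ} {N R n s : ℕ} (hε : 0 < ε)
    (hN : ε * N ≤ 2 * n * L) (hR : ε * N ≤ R) (hs : 100 * n * L ≤ ε ^ 2 * s) :
    50 * N * N ≤ R * s := by
  have h50 : 50 * (N : ℝ) ≤ ε * s := by nlinarith
  have : ε * (50 * N * N) ≤ ε * (R * s) := by nlinarith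
  exact_mod_cast le_of_mul_le_mul_left this hε

section Expander

variable {m d s : ℕ}

theorem nbrs_eq_image_uncurry (f : Fin m → Fin d → Fin s) (A : Finset (Fin m)) :
    nbrs f A = (A ×ˢ univ).image (Function.uncurry f) := by
  ext y
  simp [nbrs, nbr]

theorem card_filter_card_nbrs_add_le [NeZero s] (A : Finset (Fin m)) (r : ℕ) :
    #{f : Fin m → Fin d → Fin s | #(nbrs f A) + r ≤ #A * d} ≤
      (#A * d).choose r * ((#A * d) ^ r * s ^ (m * d - r)) := by
  have hcard : #(A ×ˢ (univ : Finset (Fin d))) = #A * d := by simp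
  have key := card_filter_card_image_add_le (β := Fin s) (A ×ˢ (univ : Finset (Fin d))) r
  simp only [hcard, Fintype.card_fin, Fintype.card_prod] at key
  refine le_of_eq_of_le (card_equiv (Equiv.curry _ _ _).symm fun f => ?_) key
  simp [nbrs_eq_image_uncurry]

theorem exists_card_nbrs_add_le_of_not_isExpander {k : ℕ} {δ : ℝ} (hδ : 0 ≤ δ)
    {f : Fin m → Fin d → Fin s} (hf : ¬ IsExpander f k δ) :
    ∃ A : Finset (Fin m), #A ∈ Icc 1 k ∧ #(nbrs f A) + (⌊δ * (#A * d : ℕ)⌋₊ + 1) ≤ #A * d := by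
  simp only [IsExpander, not_forall, not_le, exists_prop] at hf
  obtain ⟨A, hAk, hA⟩ := hf
  have hA0 : #A ≠ 0 := by
    intro h
    simp only [h, Nat.cast_zero, mul_zero] at hA
    exact (Nat.cast_nonneg _).not_gt hA
  refine ⟨A, mem_Icc.2 ⟨Nat.one_le_iff_ne_zero.2 hA0, hAk⟩, ?_⟩
  have hfloor := Nat.floor_le (mul_nonneg hδ (Nat.cast_nonneg (#A * d)))
  have : ((#(nbrs f A) + ⌊δ * (#A * d : ℕ)⌋₊ : ℕ) : ℝ) < (#A * d : ℕ) := by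
    push_cast at hfloor ⊢
    linarith
  exact_mod_cast this

open Classical in
theorem card_not_isExpander_le_sum (k : ℕ) {δ : ℝ} (hδ : 0 ≤ δ) :
    #{f : Fin m → Fin d → Fin s | ¬ IsExpander f k δ} ≤
      ∑ a ∈ Icc 1 k, ∑ A ∈ powersetCard a univ,
        #{f : Fin m → Fin d → Fin s | #(nbrs f A) + (⌊δ * (a * d : ℕ)⌋₊ + 1) ≤ a * d} := by
  calc _ ≤ #((Icc 1 k).biUnion fun a => (powersetCard a univ).biUnion fun A =>
        ({f | #(nbrs f A) + (⌊δ * (a * d : ℕ)⌋₊ + 1) ≤ a * d} :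
          Finset (Fin m → Fin d → Fin s))) := by
        refine card_le_card fun f hf => ?_
        obtain ⟨A, hA, hAf⟩ :=
          exists_card_nbrs_add_le_of_not_isExpander hδ (mem_filter.1 hf).2
        simp only [mem_biUnion, mem_powersetCard_univ, mem_filter, mem_univ, true_and]
        exact ⟨#A, hA, A, rfl, hAf⟩
    _ ≤ _ := card_biUnion_le.trans (sum_le_sum fun a _ => card_biUnion_le)

theorem sum_card_filter_card_nbrs_add_le [NeZero s] {a R : ℕ} (hmR : (m : ℝ) ^ a ≤ 2 ^ R)
    (haR : a ≤ R) (hRs : 50 * (a * d) * (a * d) ≤ R * s) :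
    ∑ A ∈ powersetCard a (univ : Finset (Fin m)),
      (#{f : Fin m → Fin d → Fin s | #(nbrs f A) + R ≤ a * d} : ℝ) ≤
        (3 / 25) ^ a * s ^ (m * d) := by
  calc _ ≤ ∑ A ∈ powersetCard a (univ : Finset (Fin m)),
        (3 / 50 : ℝ) ^ R * s ^ (m * d) := by
        refine sum_le_sum fun A hA => ?_
        rw [mem_powersetCard_univ] at hA
        subst hA
        refine (Nat.cast_le.2 (card_filter_card_nbrs_add_le A R)).trans ?_
        exact choose_mul_pow_mul_pow_sub_le (NeZero.pos s)
          (Nat.mul_le_mul_right d (card_le_univ A |>.trans_eq (Fintype.card_fin m))) hRs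
    _ = m.choose a * ((3 / 50 : ℝ) ^ R * s ^ (m * d)) := by simp
    _ ≤ 2 ^ R * ((3 / 50 : ℝ) ^ R * s ^ (m * d)) := by
        gcongr
        exact (Nat.cast_le.2 (Nat.choose_le_pow m a)).trans (by exact_mod_cast hmR)
    _ = (3 / 25) ^ R * s ^ (m * d) := by rw [← mul_assoc, ← mul_pow]; norm_num
    _ ≤ (3 / 25) ^ a * s ^ (m * d) := by
        gcongr ?_ * _
        exact pow_le_pow_of_le_one (by norm_num) (by norm_num) haR

open Classical in
theorem card_not_isExpander_le [NeZero s] {n : ℕ} {ε : ℝ} (hε : 0 < ε)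
    (hL : 1 ≤ Real.logb 2 m) (hLd : Real.logb 2 m ≤ ε * d) (hdL : ε * d ≤ 2 * Real.logb 2 m)
    (hsL : 100 * n * Real.logb 2 m ≤ ε ^ 2 * s) :
    (#{f : Fin m → Fin d → Fin s | ¬ IsExpander f n ε} : ℝ) ≤ 3 / 22 * s ^ (m * d) := by
  have hm : 0 < m := Nat.pos_of_ne_zero (by rintro rfl; norm_num at hL)
  calc _ ≤ ∑ a ∈ Icc 1 n, ∑ A ∈ powersetCard a univ,
        (#{f : Fin m → Fin d → Fin s | #(nbrs f A) + (⌊ε * (a * d : ℕ)⌋₊ + 1) ≤ a * d} : ℝ) := by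
        exact_mod_cast card_not_isExpander_le_sum n hε.le
    _ ≤ ∑ a ∈ Icc 1 n, (3 / 25 : ℝ) ^ a * s ^ (m * d) := by
        refine sum_le_sum fun a ha => ?_
        have hR : ε * (a * d : ℕ) < (⌊ε * (a * d : ℕ)⌋₊ + 1 : ℕ) := by
          push_cast; exact Nat.lt_floor_add_one _
        have han : (a : ℝ) ≤ n := by exact_mod_cast (mem_Icc.1 ha).2
        have hLa : Real.logb 2 m * a < (⌊ε * (a * d : ℕ)⌋₊ + 1 : ℕ) := by
          push_cast at hR ⊢; nlinarith
        exact sum_card_filter_card_nbrs_add_le (pow_le_two_pow_of_logb_mul_le hm hLa.le)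
          (by exact_mod_cast ((le_mul_of_one_le_left (by positivity) hL).trans_lt hLa).le)
          (fifty_mul_sq_le hε (by push_cast; nlinarith) hR.le hsL)
    _ = (∑ a ∈ Ico 1 (n + 1), (3 / 25 : ℝ) ^ a) * s ^ (m * d) := by
        rw [sum_mul, Ico_add_one_right_eq_Icc]
    _ ≤ 3 / 22 * s ^ (m * d) := by
        gcongr
        exact (geom_sum_Ico_le_of_lt_one (by norm_num) (by norm_num)).trans (by norm_num)
end Expander

theorem stmt_4 (ε : ℝ) (hε0 : 0 < ε) (hε1 : ε < 1) (m n : ℕ) (hm : 2 ≤ m) (hn : 1 ≤ n)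
    (d s : ℕ) (hd : d = ⌈Real.logb 2 m / ε⌉₊)
    (hs : s = ⌈100 * n * Real.logb 2 m / ε ^ 2⌉₊) :
    ((s : ℝ) ^ (m * d)) / 2
      < (({f : Fin m → Fin d → Fin s | IsExpander f n ε}).ncard : ℝ) := by
  classical
  have hL : 1 ≤ Real.logb 2 m := by
    rw [Real.le_logb_iff_rpow_le one_lt_two (by positivity), Real.rpow_one]
    exact_mod_cast hm
  have hsL : 100 * n * Real.logb 2 m ≤ ε ^ 2 * s := by
    rw [← div_le_iff₀' (by positivity), hs]
    exact Nat.le_ceil _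
  have hs0 : 0 < s := by
    have : (1 : ℝ) ≤ n := by exact_mod_cast hn
    exact_mod_cast pos_of_mul_pos_right (by nlinarith : 0 < ε ^ 2 * s) (by positivity)
  have : NeZero s := ⟨hs0.ne'⟩
  have hbad := card_not_isExpander_le hε0 hL (hd ▸ le_mul_ceil_div _ hε0)
    (hd ▸ mul_ceil_div_le hε0 (hε1.le.trans hL)) hsL
  have hsplit : (({f : Fin m → Fin d → Fin s | IsExpander f n ε}).ncard : ℝ) +
      #{f : Fin m → Fin d → Fin s | ¬ IsExpander f n ε} = s ^ (m * d) := by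
    rw [Set.ncard_eq_toFinset_card', Set.toFinset_ofPred]
    exact_mod_cast (card_filter_add_card_filter_not _).trans (by simp [← pow_mul, mul_comm])
  have : (0 : ℝ) < s ^ (m * d) := by positivity
  linarith
end

section
/- Fix a real ε with 0 < ε < 1. For all integers m ≥ 2 and n ≥ 1 and every A ⊆ Fin m with |A| = n, setting d = ⌈2·(log₂ m)/ε⌉ and s = 2·d²·n, the number of functions f : Fin m → Fin d → Fin s for which there exists some x ∈ Fin m \ A with |Γ(x) ∩ Γ(A)| ≥ ε·d is less than s^{m·d}/m; in particular, the strong ε-reduction property for A holds for the majority of such functions. -/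
/-! Fix `x ∉ A` and `t = ⌈ε d⌉`. The set `Γ(A)` does not depend on the edges at `x` and has at
most `n d` elements, so `t` prescribed edges at `x` all land in `Γ(A)` with probability at most
`(n d / s) ^ t = (2 d) ^ (-t)`. A union bound over the `C(d, t) ≤ d ^ t` choices of edges and the
`m - n` choices of `x` bounds the failure probability by `(m - n) / 2 ^ t ≤ (m - n) / m ^ 2 < 1 / m`,
because the choice of `d` makes `t ≥ 2 log₂ m`. -/

open Finset Function

section Counting

variable {ι β : Type*} [Fintype ι] [DecidableEq ι] [Fintype β]

lemma card_piFinset_ite_mem (S : Finset ι) (T : Finset β) :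
    #(Fintype.piFinset fun i => if i ∈ S then T else univ) =
      #T ^ #S * Fintype.card β ^ (Fintype.card ι - #S) := by
  simp only [Fintype.card_piFinset, apply_ite card, card_univ, prod_ite, prod_const]
  rw [filter_mem_eq_inter, univ_inter, ← card_compl]
  congr 3
  ext
  simp

variable [DecidableEq β]

lemma card_filter_le_card_image_inter (T : Finset β) (t : ℕ) :
    #{b : ι → β | t ≤ #(univ.image b ∩ T)} ≤
      (Fintype.card ι).choose t * (#T ^ t * Fintype.card β ^ (Fintype.card ι - t)) := by
  calc #{b : ι → β | t ≤ #(univ.image b ∩ T)}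
      ≤ #((powersetCard t univ).biUnion fun S =>
          Fintype.piFinset fun i => if i ∈ S then T else univ) := by
        refine card_le_card fun b hb => ?_
        have hT : t ≤ #{i | b i ∈ T} := by
          refine (mem_filter.1 hb).2.trans ?_
          rw [← filter_mem_eq_inter, filter_image]
          exact card_image_le
        obtain ⟨S, hS, rfl⟩ := exists_subset_card_eq hT
        refine mem_biUnion.2 ⟨S, mem_powersetCard.2 ⟨subset_univ S, rfl⟩, ?_⟩
        refine Fintype.mem_piFinset.2 fun i => ?_
        split_ifs with hi
        · exact (mem_filter.1 (hS hi)).2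
        · exact mem_univ _
    _ ≤ ∑ S ∈ powersetCard t univ, #(Fintype.piFinset fun i => if i ∈ S then T else univ) :=
        card_biUnion_le
    _ = _ := by
        rw [sum_congr rfl fun S hS => by rw [card_piFinset_ite_mem, (mem_powersetCard.1 hS).2],
          sum_const, card_powersetCard, card_univ, smul_eq_mul]

lemma card_filter_apply_le [Nonempty β] (x : ι) (P : (ι → β) → β → Prop)
    [∀ f, DecidablePred (P f)] (hP : ∀ f c, P (update f x c) = P f) {K : ℕ}
    (hK : ∀ f, #{b | P f b} ≤ K) :
    #{f | P f (f x)} ≤ Fintype.card β ^ (Fintype.card ι - 1) * K := by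
  obtain ⟨c⟩ := ‹Nonempty β›
  calc #{f | P f (f x)}
      ≤ #((univ.filter fun g : ι → β => g x = c).sigma fun g => {b | P g b}) := by
        refine card_le_card_of_injOn (fun f => ⟨update f x c, f x⟩) (fun f hf => ?_) ?_
        · simp_all
        · intro f _ g _ hfg
          simp only [Sigma.mk.injEq, heq_eq_eq] at hfg
          calc f = update (update f x c) x (f x) := by rw [update_idem, update_eq_self]
            _ = update (update g x c) x (g x) := by rw [hfg.1, hfg.2]
            _ = g := by rw [update_idem, update_eq_self]
    _ = ∑ g ∈ univ.filter fun g : ι → β => g x = c, #{b | P g b} := card_sigma _ _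
    _ ≤ #(univ.filter fun g : ι → β => g x = c) * K := sum_le_card_nsmul _ _ _ fun g _ => hK g
    _ = _ := by
        rw [← Fintype.piFinset_univ, Fintype.card_filter_piFinset_const_eq_of_mem _ _ (mem_univ c),
          card_univ]

end Counting

section Neighbors

variable {m d s : ℕ}

lemma card_nbrs_le (f : Fin m → Fin d → Fin s) (A : Finset (Fin m)) : #(nbrs f A) ≤ #A * d :=
  card_biUnion_le.trans <| sum_le_card_nsmul _ _ _ fun _ _ =>
    card_image_le.trans (card_univ.trans (Fintype.card_fin d)).le

lemma nbrs_update_of_notMem {A : Finset (Fin m)} {x : Fin m} (hx : x ∉ A)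
    (f : Fin m → Fin d → Fin s) (c : Fin d → Fin s) : nbrs (update f x c) A = nbrs f A :=
  biUnion_congr rfl fun v hv => by rw [nbr, nbr, update_of_ne (ne_of_mem_of_not_mem hv hx)]

lemma card_filter_le_card_nbr_inter_nbrs [NeZero s] {A : Finset (Fin m)} {x : Fin m} (hx : x ∉ A)
    (t : ℕ) :
    #{f : Fin m → Fin d → Fin s | t ≤ #(nbr f x ∩ nbrs f A)} ≤
      (s ^ d) ^ (m - 1) * (d.choose t * ((#A * d) ^ t * s ^ (d - t))) := by
  have key := card_filter_apply_le x
    (fun (f : Fin m → Fin d → Fin s) b => t ≤ #(univ.image b ∩ nbrs f A))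
    (fun f c => by simp only [nbrs_update_of_notMem hx])
    (K := d.choose t * ((#A * d) ^ t * s ^ (d - t))) fun f =>
      (card_filter_le_card_image_inter (nbrs f A) t).trans <| by
        simp only [Fintype.card_fin]
        gcongr
        exact card_nbrs_le f A
  exact key.trans_eq (by simp)

lemma card_filter_exists_le [NeZero s] (A : Finset (Fin m)) (t : ℕ) :
    #{f : Fin m → Fin d → Fin s | ∃ x ∉ A, t ≤ #(nbr f x ∩ nbrs f A)} ≤
      (m - #A) * ((s ^ d) ^ (m - 1) * (d.choose t * ((#A * d) ^ t * s ^ (d - t)))) := by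
  calc #{f : Fin m → Fin d → Fin s | ∃ x ∉ A, t ≤ #(nbr f x ∩ nbrs f A)}
      ≤ #(Aᶜ.biUnion fun x => {f : Fin m → Fin d → Fin s | t ≤ #(nbr f x ∩ nbrs f A)}) :=
        card_le_card fun f hf => by
          obtain ⟨x, hx, hf⟩ := (mem_filter.1 hf).2
          exact mem_biUnion.2 ⟨x, mem_compl.2 hx, mem_filter.2 ⟨mem_univ f, hf⟩⟩
    _ ≤ _ := card_biUnion_le.trans <| sum_le_card_nsmul _ _ _ fun x hx =>
        card_filter_le_card_nbr_inter_nbrs (mem_compl.1 hx) t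
    _ = _ := by rw [card_compl, Fintype.card_fin, smul_eq_mul]

end Neighbors

lemma mul_choose_pow_mul_lt {m n d s t : ℕ} (hs : s = 2 * d ^ 2 * n) (hn : 0 < n) (hm : 0 < m)
    (hd : 0 < d) (htd : t ≤ d) (hmt : m ^ 2 ≤ 2 ^ t) :
    (m - n) * ((s ^ d) ^ (m - 1) * (d.choose t * ((n * d) ^ t * s ^ (d - t)))) * m <
      s ^ (m * d) := by
  have hs_pos : 0 < s := hs ▸ by positivity
  set R := (s ^ d) ^ (m - 1) * s ^ (d - t) with hR_def
  have hR : 0 < R := by positivity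
  have hX : 0 < d.choose t * (n * d) ^ t := by positivity [Nat.choose_pos htd]
  have hsR : s ^ (m * d) = s ^ t * R := by
    have hdm : d ≤ d * m := Nat.le_mul_of_pos_right d hm
    rw [hR_def, ← pow_mul, ← pow_add, ← pow_add, Nat.mul_sub_one, Nat.mul_comm m d]
    congr 1
    omega
  have hchoose : 2 ^ t * (d.choose t * (n * d) ^ t) ≤ s ^ t :=
    calc 2 ^ t * (d.choose t * (n * d) ^ t) ≤ 2 ^ t * (d ^ t * (n * d) ^ t) := by
          gcongr; exact d.choose_le_pow t
      _ = s ^ t := by rw [← mul_pow, ← mul_pow, hs]; ring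
  have hmn : (m - n) * m < 2 ^ t :=
    calc (m - n) * m < m * m := by gcongr; omega
      _ = m ^ 2 := (sq m).symm
      _ ≤ 2 ^ t := hmt
  calc (m - n) * ((s ^ d) ^ (m - 1) * (d.choose t * ((n * d) ^ t * s ^ (d - t)))) * m
      = (m - n) * m * (d.choose t * (n * d) ^ t) * R := by ring
    _ < 2 ^ t * (d.choose t * (n * d) ^ t) * R := by gcongr
    _ ≤ s ^ t * R := by gcongr
    _ = s ^ (m * d) := hsR.symm

lemma sq_le_two_pow_ceil_mul {ε : ℝ} (hε : 0 < ε) {m d : ℕ} (hm : 0 < m)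
    (hd : 2 * Real.logb 2 m / ε ≤ d) : m ^ 2 ≤ 2 ^ ⌈ε * d⌉₊ := by
  have hlog : Real.logb 2 ((m : ℝ) ^ 2) ≤ ⌈ε * d⌉₊ :=
    calc Real.logb 2 ((m : ℝ) ^ 2) = 2 * Real.logb 2 m := by rw [Real.logb_pow]; push_cast; ring
      _ ≤ ε * d := by rw [div_le_iff₀ hε] at hd; linarith
      _ ≤ ⌈ε * d⌉₊ := Nat.le_ceil _
  rw [Real.logb_le_iff_le_rpow one_lt_two (by positivity), Real.rpow_natCast] at hlog
  exact_mod_cast hlog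

lemma half_lt_ncard_of_compl_subset {α : Type*} [Finite α] {B G : Set α} (hBG : Bᶜ ⊆ G)
    {c : ℝ} (hc : 2 ≤ c) (hB : (B.ncard : ℝ) < Nat.card α / c) :
    (Nat.card α : ℝ) / 2 < G.ncard := by
  have hsplit : (B.ncard + Bᶜ.ncard : ℝ) = Nat.card α := by
    exact_mod_cast Set.ncard_add_ncard_compl B
  have hcompl : (Bᶜ.ncard : ℝ) ≤ G.ncard := by exact_mod_cast Set.ncard_le_ncard hBG
  have hhalf : (Nat.card α : ℝ) / c ≤ Nat.card α / 2 :=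
    div_le_div_of_nonneg_left (by positivity) two_pos hc
  linarith

theorem stmt_6 (ε : ℝ) (hε0 : 0 < ε) (hε1 : ε < 1) (m n : ℕ) (hm : 2 ≤ m) (hn : 1 ≤ n)
    (A : Finset (Fin m)) (hA : A.card = n)
    (d s : ℕ) (hd : d = ⌈2 * Real.logb 2 m / ε⌉₊) (hs : s = 2 * d ^ 2 * n) :
    (({f : Fin m → Fin d → Fin s |
        ∃ x : Fin m, x ∉ A ∧ ε * d ≤ ((nbr f x ∩ nbrs f A).card : ℝ)}).ncard : ℝ)
      < (s : ℝ) ^ (m * d) / m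
    ∧ (s : ℝ) ^ (m * d) / 2
      < (({f : Fin m → Fin d → Fin s |
          ∀ x : Fin m, x ∉ A → ((nbr f x ∩ nbrs f A).card : ℝ) ≤ ε * d}).ncard : ℝ) := by
  classical
  set t := ⌈ε * d⌉₊
  have hd_pos : 0 < d := hd ▸ Nat.ceil_pos.2 (by
    have : 0 < Real.logb 2 m := Real.logb_pos one_lt_two (by exact_mod_cast hm)
    positivity)
  have htd : t ≤ d := Nat.ceil_le.2 (by nlinarith [(Nat.cast_pos.2 hd_pos : (0 : ℝ) < d)])
  have hmt : m ^ 2 ≤ 2 ^ t := sq_le_two_pow_ceil_mul hε0 (by omega) (hd ▸ Nat.le_ceil _)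
  have : NeZero s := ⟨by rw [hs]; positivity⟩
  set Bad := {f : Fin m → Fin d → Fin s |
    ∃ x : Fin m, x ∉ A ∧ ε * d ≤ ((nbr f x ∩ nbrs f A).card : ℝ)}
  have hBad : Bad.ncard * m < s ^ (m * d) := by
    have hceil : Bad =
        ({f | ∃ x ∉ A, t ≤ #(nbr f x ∩ nbrs f A)} : Finset (Fin m → Fin d → Fin s)) := by
      ext f
      simp [Bad, t, Nat.ceil_le]
    rw [hceil, Set.ncard_coe_finset]
    refine (Nat.mul_le_mul_right m (card_filter_exists_le A t)).trans_lt ?_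
    rw [hA]
    exact mul_choose_pow_mul_lt hs (by omega) (by omega) hd_pos htd hmt
  have hfirst : (Bad.ncard : ℝ) < (s : ℝ) ^ (m * d) / m := by
    rw [lt_div_iff₀ (by positivity)]
    exact_mod_cast hBad
  have hcard : (Nat.card (Fin m → Fin d → Fin s) : ℝ) = (s : ℝ) ^ (m * d) := by
    simp [← pow_mul, mul_comm]
  refine ⟨hfirst, hcard ▸ half_lt_ncard_of_compl_subset ?_ (by exact_mod_cast hm) (hcard ▸ hfirst)⟩
  exact fun f hf x hx => (not_le.1 fun h => hf ⟨x, hx, h⟩).le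
end

section
/- Let ε > 0 and let f be an (m,s,d,k,δ)-expander with δ ≤ ε/4. Then for every A ⊆ Fin m with |A| ≤ k/2 there exists a labeling ℓ : Fin s → Bool such that: (i) every v ∈ A has at most ε·d indices i : Fin d with ℓ(f v i) = false; and (ii) every x ∈ Fin m \ A has at most ε·d indices i : Fin d with ℓ(f x i) = true. (Thus a single random probe answers the membership query with two-sided error at most ε.) -/
open Finset

lemma mem_nbrs_of_mem {m d s : ℕ} (f : Fin m → Fin d → Fin s) {v : Fin m}
    {P : Finset (Fin m)} (hv : v ∈ P) (i : Fin d) : f v i ∈ nbrs f P :=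
  Finset.subset_biUnion_of_mem (nbr f) hv (Finset.mem_image_of_mem _ (Finset.mem_univ i))

lemma nbrs_mono {m d s : ℕ} (f : Fin m → Fin d → Fin s) {P Q : Finset (Fin m)}
    (h : P ⊆ Q) : nbrs f P ⊆ nbrs f Q :=
  Finset.biUnion_subset_biUnion_of_subset_left _ h

lemma nbrs_card_le {m d s : ℕ} (f : Fin m → Fin d → Fin s) (P : Finset (Fin m)) :
    (nbrs f P).card ≤ P.card * d := by
  refine le_trans (Finset.card_biUnion_le) ?_
  rw [← Finset.sum_const_nat (m := d) (fun x _ => rfl)]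
  exact Finset.sum_le_sum fun v _ => le_trans Finset.card_image_le (by simp)

/-- Core counting lemma: the neighborhood of `P ∪ Q` is at most the neighborhood of `Q`
plus, for each `v ∈ P`, the number of edge slots of `v` that do not land in `nbrs f Q`. -/
lemma core {m d s : ℕ} (f : Fin m → Fin d → Fin s) (P Q : Finset (Fin m)) :
    (nbrs f (P ∪ Q)).card + ∑ v ∈ P, (univ.filter fun i => f v i ∈ nbrs f Q).card
      ≤ (nbrs f Q).card + P.card * d := by
  classical
  have hsub : nbrs f (P ∪ Q) ⊆ nbrs f Q ∪ P.biUnion (fun v => nbr f v \ nbrs f Q) := by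
    intro y hy
    obtain ⟨w, hw, hyw⟩ := Finset.mem_biUnion.1 hy
    by_cases hyQ : y ∈ nbrs f Q
    · exact Finset.mem_union_left _ hyQ
    · rcases Finset.mem_union.1 hw with hP | hQ
      · exact Finset.mem_union_right _ (Finset.mem_biUnion.2 ⟨w, hP, Finset.mem_sdiff.2 ⟨hyw, hyQ⟩⟩)
      · exact absurd (Finset.subset_biUnion_of_mem (nbr f) hQ hyw) hyQ
  have h1 : (nbrs f (P ∪ Q)).card ≤ (nbrs f Q).card + ∑ v ∈ P, (nbr f v \ nbrs f Q).card :=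
    le_trans (Finset.card_le_card hsub) (le_trans (Finset.card_union_le _ _)
      (by gcongr; exact Finset.card_biUnion_le))
  have h2 : ∀ v ∈ P, (nbr f v \ nbrs f Q).card
      + (univ.filter fun i => f v i ∈ nbrs f Q).card ≤ d := by
    intro v _
    have hsub2 : nbr f v \ nbrs f Q ⊆ (univ.filter fun i => f v i ∉ nbrs f Q).image (f v) := by
      intro y hy
      obtain ⟨hy1, hy2⟩ := Finset.mem_sdiff.1 hy
      obtain ⟨i, _, rfl⟩ := Finset.mem_image.1 hy1
      exact Finset.mem_image_of_mem _ (Finset.mem_filter.2 ⟨Finset.mem_univ _, hy2⟩)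
    have hc : (nbr f v \ nbrs f Q).card ≤ (univ.filter fun i => f v i ∉ nbrs f Q).card :=
      le_trans (Finset.card_le_card hsub2) Finset.card_image_le
    have := Finset.card_filter_add_card_filter_not
      (s := (univ : Finset (Fin d))) (p := fun i => f v i ∈ nbrs f Q)
    simp only [Finset.card_univ, Fintype.card_fin] at this
    omega
  have h3 : ∑ v ∈ P, ((nbr f v \ nbrs f Q).card
      + (univ.filter fun i => f v i ∈ nbrs f Q).card) ≤ P.card * d := by
    rw [← Finset.sum_const_nat (m := d) (fun x _ => rfl)]
    exact Finset.sum_le_sum h2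
  rw [Finset.sum_add_distrib] at h3
  omega

/-- Any set `B'` of vertices outside `A`, each of which has more than `ε·d` edges into
`nbrs f A`, satisfies `3·|B'| ≤ |A|` (provided `|A| + |B'| ≤ k`). -/
lemma badB {m d s k : ℕ} (ε δ : ℝ) (hε : 0 < ε) (hδ : δ ≤ ε / 4) (hd : 0 < d)
    (f : Fin m → Fin d → Fin s) (hf : IsExpander f k δ)
    (A B' : Finset (Fin m)) (hdisj : Disjoint A B')
    (hbad : ∀ x ∈ B', ε * d < ((univ.filter fun i => f x i ∈ nbrs f A).card : ℝ))
    (hk : A.card + B'.card ≤ k) : 3 * B'.card ≤ A.card := by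
  classical
  have hdR : (0:ℝ) < d := by exact_mod_cast hd
  have h1 := hf (A ∪ B') (by rw [Finset.card_union_of_disjoint hdisj]; exact hk)
  rw [Finset.card_union_of_disjoint hdisj] at h1
  have h2 := core f B' A
  rw [Finset.union_comm B' A] at h2
  have h2R : ((nbrs f (A ∪ B')).card : ℝ)
      + ∑ x ∈ B', ((univ.filter fun i => f x i ∈ nbrs f A).card : ℝ)
      ≤ ((nbrs f A).card : ℝ) + (B'.card : ℝ) * d := by exact_mod_cast h2
  have h3 : (ε * d) * (B'.card : ℝ)
      ≤ ∑ x ∈ B', ((univ.filter fun i => f x i ∈ nbrs f A).card : ℝ) := by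
    calc (ε * d) * (B'.card : ℝ) = ∑ _x ∈ B', (ε * d) := by
          rw [Finset.sum_const, nsmul_eq_mul]; ring
      _ ≤ _ := Finset.sum_le_sum fun x hx => (hbad x hx).le
  have h4 : ((nbrs f A).card : ℝ) ≤ (A.card : ℝ) * d := by exact_mod_cast nbrs_card_le f A
  have ha : (0:ℝ) ≤ (A.card : ℝ) := Nat.cast_nonneg _
  have hb : (0:ℝ) ≤ (B'.card : ℝ) := Nat.cast_nonneg _
  have key : ε * d * (B'.card : ℝ) ≤ δ * d * ((A.card : ℝ) + (B'.card : ℝ)) := by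
    push_cast at h1
    nlinarith [h1, h2R, h3, h4]
  have key2 : 3 * (B'.card : ℝ) ≤ (A.card : ℝ) := by
    nlinarith [mul_pos hε hdR, mul_nonneg (mul_nonneg hε.le hdR.le) hb,
      mul_nonneg hdR.le (add_nonneg ha hb)]
  exact_mod_cast key2

/-- Main recursive construction: for any `A` with `2·|A| ≤ k` there is a set `T`
of right vertices, contained in `nbrs f A`, such that every `v ∈ A` has at most `ε·d`
edge slots outside `T` and every `x ∉ A` has at most `ε·d` edge slots inside `T`. -/
lemma key_lemma {m d s k : ℕ} (ε δ : ℝ) (hε : 0 < ε) (hδ : δ ≤ ε / 4) (hd : 0 < d)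
    (f : Fin m → Fin d → Fin s) (hf : IsExpander f k δ) :
    ∀ n (A : Finset (Fin m)), A.card ≤ n → 2 * A.card ≤ k →
      ∃ T : Finset (Fin s), T ⊆ nbrs f A ∧
        (∀ v ∈ A, ((univ.filter fun i => f v i ∉ T).card : ℝ) ≤ ε * d) ∧
        (∀ x, x ∉ A → ((univ.filter fun i => f x i ∈ T).card : ℝ) ≤ ε * d) := by
  classical
  have hd0 : (0:ℝ) < d := by exact_mod_cast hd
  have hεd : (0:ℝ) ≤ ε * d := by positivity
  intro n
  induction n with
  | zero =>
    intro A hA _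
    have hA0 : A = ∅ := Finset.card_eq_zero.1 (Nat.le_zero.1 hA)
    subst hA0
    exact ⟨∅, by simp, by simp, fun x _ => by simpa using hεd⟩
  | succ n ih =>
    intro A hA hAk
    by_cases hAe : A = ∅
    · subst hAe
      exact ⟨∅, by simp, by simp, fun x _ => by simpa using hεd⟩
    · have hA1 : 1 ≤ A.card := Finset.card_pos.2 (Finset.nonempty_iff_ne_empty.2 hAe)
      set NA := nbrs f A with hNA
      set B : Finset (Fin m) := univ.filter
        (fun x => x ∉ A ∧ ε * d < ((univ.filter fun i => f x i ∈ NA).card : ℝ)) with hBdef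
      have hBdisj : Disjoint A B := by
        rw [Finset.disjoint_right]
        intro x hx
        exact ((Finset.mem_filter.1 hx).2).1
      have hBbad : ∀ x ∈ B, ε * d < ((univ.filter fun i => f x i ∈ NA).card : ℝ) :=
        fun x hx => ((Finset.mem_filter.1 hx).2).2
      -- bound on B
      have hB3 : 3 * B.card ≤ A.card := by
        by_contra hcon
        push_neg at hcon
        have ht : A.card / 3 + 1 ≤ B.card := by omega
        obtain ⟨B', hB'B, hB'card⟩ := Finset.exists_subset_card_eq ht
        have := badB ε δ hε hδ hd f hf A B'
          (hBdisj.mono_right hB'B)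
          (fun x hx => hBbad x (hB'B hx))
          (by omega)
        omega
      have hABk : A.card + B.card ≤ k := by omega
      -- sum bound over A of edge slots into nbrs f B
      set NB := nbrs f B with hNB
      have hsumA : ∑ v ∈ A, ((univ.filter fun i => f v i ∈ NB).card : ℝ)
          ≤ δ * d * ((A.card : ℝ) + (B.card : ℝ)) := by
        have h1 := hf (A ∪ B) (by rw [Finset.card_union_of_disjoint hBdisj]; exact hABk)
        rw [Finset.card_union_of_disjoint hBdisj] at h1
        have h2 := core f A B
        have h2R : ((nbrs f (A ∪ B)).card : ℝ)
            + ∑ v ∈ A, ((univ.filter fun i => f v i ∈ NB).card : ℝ)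
            ≤ ((NB).card : ℝ) + (A.card : ℝ) * d := by exact_mod_cast h2
        have h4 : ((NB).card : ℝ) ≤ (B.card : ℝ) * d := by exact_mod_cast nbrs_card_le f B
        push_cast at h1
        nlinarith [h1, h2R, h4]
      set V : Finset (Fin m) := A.filter
        (fun v => ε * d < ((univ.filter fun i => f v i ∈ NB).card : ℝ)) with hVdef
      have hVA : V ⊆ A := Finset.filter_subset _ _
      have hVcard : V.card < A.card := by
        by_cases hVe : V = ∅
        · rw [hVe]; simpa using hA1
        · have hVne : V.Nonempty := Finset.nonempty_iff_ne_empty.2 hVe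
          have hlt : (ε * d) * (V.card : ℝ)
              < ∑ v ∈ V, ((univ.filter fun i => f v i ∈ NB).card : ℝ) := by
            calc (ε * d) * (V.card : ℝ) = ∑ _v ∈ V, (ε * d) := by
                  rw [Finset.sum_const, nsmul_eq_mul]; ring
              _ < _ := Finset.sum_lt_sum_of_nonempty hVne
                  (fun v hv => ((Finset.mem_filter.1 hv).2))
          have hmono : ∑ v ∈ V, ((univ.filter fun i => f v i ∈ NB).card : ℝ)
              ≤ ∑ v ∈ A, ((univ.filter fun i => f v i ∈ NB).card : ℝ) :=
            Finset.sum_le_sum_of_subset_of_nonneg hVA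
              (fun v _ _ => Nat.cast_nonneg _)
          have hB3R : 3 * (B.card : ℝ) ≤ (A.card : ℝ) := by exact_mod_cast hB3
          have h3V : 3 * (V.card : ℝ) < (A.card : ℝ) := by
            nlinarith [mul_pos hε hd0, Nat.cast_nonneg (α := ℝ) V.card,
              Nat.cast_nonneg (α := ℝ) A.card, Nat.cast_nonneg (α := ℝ) B.card,
              mul_nonneg hd0.le (add_nonneg (Nat.cast_nonneg (α := ℝ) A.card)
                (Nat.cast_nonneg (α := ℝ) B.card))]
          have : 3 * V.card < A.card := by exact_mod_cast h3V
          omega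
      -- recurse on V
      obtain ⟨T', hT'V, hi', hii'⟩ := ih V (by omega) (by
        have := Finset.card_le_card hVA; omega)
      refine ⟨(NA \ NB) ∪ T', ?_, ?_, ?_⟩
      · exact Finset.union_subset (Finset.sdiff_subset)
          (hT'V.trans (nbrs_mono f hVA))
      · intro v hv
        by_cases hvV : v ∈ V
        · refine le_trans ?_ (hi' v hvV)
          have hsub : (univ.filter fun i => f v i ∉ (NA \ NB) ∪ T')
              ⊆ (univ.filter fun i => f v i ∉ T') := by
            intro i hi
            rw [Finset.mem_filter] at hi ⊢
            exact ⟨hi.1, fun h => hi.2 (Finset.mem_union_right _ h)⟩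
          exact_mod_cast Finset.card_le_card hsub
        · have hvb : ¬ (ε * d < ((univ.filter fun i => f v i ∈ NB).card : ℝ)) := by
            intro h; exact hvV (Finset.mem_filter.2 ⟨hv, h⟩)
          refine le_trans ?_ (not_lt.1 hvb)
          have hsub : (univ.filter fun i => f v i ∉ (NA \ NB) ∪ T')
              ⊆ (univ.filter fun i => f v i ∈ NB) := by
            intro i hi
            rw [Finset.mem_filter] at hi ⊢
            refine ⟨hi.1, ?_⟩
            by_contra hnB
            exact hi.2 (Finset.mem_union_left _
              (Finset.mem_sdiff.2 ⟨mem_nbrs_of_mem f hv i, hnB⟩))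
          exact_mod_cast Finset.card_le_card hsub
      · intro x hx
        by_cases hxB : x ∈ B
        · have hxV : x ∉ V := fun h => hx (hVA h)
          refine le_trans ?_ (hii' x hxV)
          have hsub : (univ.filter fun i => f x i ∈ (NA \ NB) ∪ T')
              ⊆ (univ.filter fun i => f x i ∈ T') := by
            intro i hi
            rw [Finset.mem_filter] at hi ⊢
            refine ⟨hi.1, ?_⟩
            rcases Finset.mem_union.1 hi.2 with h | h
            · exact absurd (mem_nbrs_of_mem f hxB i) (Finset.mem_sdiff.1 h).2
            · exact h
          exact_mod_cast Finset.card_le_card hsub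
        · have hxb : ¬ (ε * d < ((univ.filter fun i => f x i ∈ NA).card : ℝ)) := by
            intro h
            exact hxB (Finset.mem_filter.2 ⟨Finset.mem_univ _, hx, h⟩)
          refine le_trans ?_ (not_lt.1 hxb)
          have hsub : (univ.filter fun i => f x i ∈ (NA \ NB) ∪ T')
              ⊆ (univ.filter fun i => f x i ∈ NA) := by
            intro i hi
            rw [Finset.mem_filter] at hi ⊢
            refine ⟨hi.1, ?_⟩
            rcases Finset.mem_union.1 hi.2 with h | h
            · exact (Finset.mem_sdiff.1 h).1
            · exact nbrs_mono f hVA (hT'V h)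
          exact_mod_cast Finset.card_le_card hsub

theorem stmt_12 {m d s k : ℕ} (ε δ : ℝ) (hε : 0 < ε) (hδ : δ ≤ ε / 4)
    (f : Fin m → Fin d → Fin s) (hf : IsExpander f k δ)
    (A : Finset (Fin m)) (hA : (A.card : ℝ) ≤ (k : ℝ) / 2) :
    ∃ ℓ : Fin s → Bool,
      (∀ v ∈ A,
        ((Finset.univ.filter (fun i : Fin d => ℓ (f v i) = false)).card : ℝ) ≤ ε * d) ∧
      (∀ x : Fin m, x ∉ A →
        ((Finset.univ.filter (fun i : Fin d => ℓ (f x i) = true)).card : ℝ) ≤ ε * d) := by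
  classical
  rcases Nat.eq_zero_or_pos d with hd0 | hd
  · refine ⟨fun _ => false, ?_, ?_⟩
    · intro v _
      subst hd0
      have : (Finset.univ.filter (fun i : Fin 0 => (fun _ => false) (f v i) = false)).card = 0 := by
        simp
      rw [this]
      simp [mul_nonneg hε.le]
    · intro x _
      subst hd0
      have : (Finset.univ.filter (fun i : Fin 0 => (fun _ => false) (f x i) = true)).card = 0 := by
        simp
      rw [this]
      simp [mul_nonneg hε.le]
  · have hAk : 2 * A.card ≤ k := by
      have : (2 * A.card : ℝ) ≤ (k : ℝ) := by linarith
      exact_mod_cast this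
    obtain ⟨T, _, hi, hii⟩ := key_lemma ε δ hε hδ hd f hf A.card A le_rfl hAk
    refine ⟨fun y => decide (y ∈ T), ?_, ?_⟩
    · intro v hv
      refine le_trans (le_of_eq ?_) (hi v hv)
      congr 2
      apply Finset.filter_congr
      intro i _
      simp [decide_eq_false_iff_not]
    · intro x hx
      refine le_trans (le_of_eq ?_) (hii x hx)
      congr 2
      apply Finset.filter_congr
      intro i _
      simp
end

section
/- Fix a real ε with 0 < ε < 1 and integers m ≥ 2, n ≥ 1. Set d = ⌈2·(log₂ m)/ε⌉ and s = 2·d²·n. Let A, W ⊆ Fin m be disjoint sets with |A| ≤ n and |W| ≤ n. Then the number of functions f : Fin m → Fin d → Fin s for which some x ∈ W has |Γ(x) ∩ Γ(A)| ≥ ε·d is less than s^{m·d}/m; in particular, the majority of such functions satisfy the restricted strong ε-reduction property: every x ∈ W has |Γ(x) ∩ Γ(A)| ≤ ε·d. -/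
open Finset in
lemma core_count {m d s : ℕ} (A : Finset (Fin m)) (x : Fin m) (hx : x ∉ A)
    (T : Finset (Fin d)) :
    ((Finset.univ.filter
        (fun f : Fin m → Fin d → Fin s => ∀ i ∈ T, f x i ∈ nbrs f A)).card)
      ≤ (s ^ d) ^ (m - 1) * ((A.card * d) ^ T.card * s ^ (d - T.card)) := by
  classical
  set P : (Fin m → Fin d → Fin s) → Prop := fun f => ∀ i ∈ T, f x i ∈ nbrs f A with hP
  set π : (Fin m → Fin d → Fin s) → ({v : Fin m // v ≠ x} → Fin d → Fin s) :=
    fun f v => f v.1 with hπ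
  rw [Finset.card_eq_sum_card_fiberwise
    (f := π) (t := (Finset.univ : Finset ({v : Fin m // v ≠ x} → Fin d → Fin s)))
    (fun f _ => Finset.mem_univ _)]
  have hfib : ∀ g : {v : Fin m // v ≠ x} → Fin d → Fin s,
      ((Finset.univ.filter P).filter (fun f => π f = g)).card
        ≤ (A.card * d) ^ T.card * s ^ (d - T.card) := by
    intro g
    set Ng : Finset (Fin s) :=
      A.attach.biUnion (fun v => Finset.image (g ⟨v.1, fun h => hx (h ▸ v.2)⟩) Finset.univ)
      with hNgdef
    have hmem : ∀ f ∈ (Finset.univ.filter P).filter (fun f => π f = g),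
        f x ∈ Fintype.piFinset (fun i : Fin d => if i ∈ T then Ng else Finset.univ) := by
      intro f hf
      simp only [Finset.mem_filter, Finset.mem_univ, true_and] at hf
      obtain ⟨hfP, hfg⟩ := hf
      have hfv : ∀ (v : Fin m) (h : v ≠ x), f v = g ⟨v, h⟩ := fun v h => congrFun hfg ⟨v, h⟩
      have hnb : nbrs f A = Ng := by
        ext y
        simp only [nbrs, nbr, hNgdef, Finset.mem_biUnion, Finset.mem_attach, true_and,
          Finset.mem_image, Finset.mem_univ, Subtype.exists]
        constructor
        · rintro ⟨v, hv, i, rfl⟩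
          refine ⟨v, hv, i, ?_⟩
          rw [← hfv]
        · rintro ⟨v, hv, i, rfl⟩
          refine ⟨v, hv, i, ?_⟩
          rw [hfv]
      rw [Fintype.mem_piFinset]
      intro i
      by_cases hi : i ∈ T
      · simp only [hi, if_true]
        rw [← hnb]
        exact hfP i hi
      · simp [hi]
    have hinj : Set.InjOn (fun f : Fin m → Fin d → Fin s => f x)
        ↑((Finset.univ.filter P).filter (fun f => π f = g)) := by
      intro f hf f' hf' hxx
      simp only [Finset.coe_filter, Set.mem_setOf_eq, Finset.mem_univ, true_and] at hf hf'
      funext v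
      by_cases h : v = x
      · subst h; exact hxx
      · rw [show f v = g ⟨v, h⟩ from congrFun hf.2 ⟨v, h⟩,
          show f' v = g ⟨v, h⟩ from congrFun hf'.2 ⟨v, h⟩]
    calc ((Finset.univ.filter P).filter (fun f => π f = g)).card
        ≤ (Fintype.piFinset (fun i : Fin d => if i ∈ T then Ng else Finset.univ)).card :=
          Finset.card_le_card_of_injOn _ hmem hinj
      _ = ∏ i : Fin d, (if i ∈ T then Ng else (Finset.univ : Finset (Fin s))).card :=
          Fintype.card_piFinset _
      _ = Ng.card ^ T.card * s ^ (d - T.card) := by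
          have : ∀ i : Fin d, (if i ∈ T then Ng else (Finset.univ : Finset (Fin s))).card
              = if i ∈ T then Ng.card else s := by
            intro i; by_cases hi : i ∈ T <;> simp [hi]
          rw [Finset.prod_congr rfl (fun i _ => this i), Finset.prod_ite]
          simp only [Finset.prod_const]
          congr 1
          · congr 1
            rw [Finset.filter_mem_eq_inter, Finset.univ_inter]
          · congr 1
            have : Finset.univ.filter (fun i => i ∉ T) = Tᶜ := by
              ext i; simp
            rw [this, Finset.card_compl, Fintype.card_fin]
      _ ≤ (A.card * d) ^ T.card * s ^ (d - T.card) := by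
          gcongr
          · calc Ng.card ≤ ∑ v ∈ A.attach, (Finset.image
                (g ⟨v.1, fun h => hx (h ▸ v.2)⟩) Finset.univ).card :=
                Finset.card_biUnion_le
            _ ≤ ∑ _v ∈ A.attach, d := by
                apply Finset.sum_le_sum
                intro v _
                exact le_trans (Finset.card_image_le) (by simp)
            _ = A.card * d := by simp [Finset.sum_const, Finset.card_attach, mul_comm]
  calc ∑ g ∈ (Finset.univ : Finset ({v : Fin m // v ≠ x} → Fin d → Fin s)),
        ((Finset.univ.filter P).filter (fun f => π f = g)).card
      ≤ ∑ _g ∈ (Finset.univ : Finset ({v : Fin m // v ≠ x} → Fin d → Fin s)),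
        ((A.card * d) ^ T.card * s ^ (d - T.card)) := Finset.sum_le_sum (fun g _ => hfib g)
    _ = (s ^ d) ^ (m - 1) * ((A.card * d) ^ T.card * s ^ (d - T.card)) := by
        rw [Finset.sum_const, smul_eq_mul, Finset.card_univ]
        congr 1
        rw [Fintype.card_fun]
        congr 1
        · rw [Fintype.card_fun]; simp
        · simp [Fintype.card_subtype_compl]

theorem stmt_14 (ε : ℝ) (hε0 : 0 < ε) (hε1 : ε < 1) (m n : ℕ) (hm : 2 ≤ m) (hn : 1 ≤ n)
    (d s : ℕ) (hd : d = ⌈2 * Real.logb 2 m / ε⌉₊) (hs : s = 2 * d ^ 2 * n)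
    (A W : Finset (Fin m)) (hAW : Disjoint A W) (hA : A.card ≤ n) (hWcard : W.card ≤ n) :
    (({f : Fin m → Fin d → Fin s |
        ∃ x ∈ W, ε * d ≤ ((nbr f x ∩ nbrs f A).card : ℝ)}).ncard : ℝ)
      < (s : ℝ) ^ (m * d) / m
    ∧ (s : ℝ) ^ (m * d) / 2
      < (({f : Fin m → Fin d → Fin s |
          ∀ x ∈ W, ((nbr f x ∩ nbrs f A).card : ℝ) ≤ ε * d}).ncard : ℝ) := by
  classical
  have hmR : (2 : ℝ) ≤ (m : ℝ) := by exact_mod_cast hm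
  have hlogb1 : 1 ≤ Real.logb 2 m := by
    rw [show (1 : ℝ) = Real.logb 2 2 from (Real.logb_self_eq_one (by norm_num)).symm]
    exact Real.logb_le_logb_of_le (by norm_num) (by norm_num) hmR
  have hdX : 2 * Real.logb 2 m / ε ≤ (d : ℝ) := hd ▸ Nat.le_ceil _
  have hεd : (2 : ℝ) * Real.logb 2 m ≤ ε * d := by
    have := (div_le_iff₀ hε0).mp hdX
    linarith
  have h2εd : (2 : ℝ) ≤ ε * d := by linarith
  have hd1 : 1 ≤ d := by
    rcases Nat.eq_zero_or_pos d with h | h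
    · rw [h] at h2εd; norm_num at h2εd
    · exact h
  set t : ℕ := ⌈ε * (d : ℝ)⌉₊ with htdef
  have ht2 : 2 ≤ t := by
    have : (2 : ℝ) ≤ (t : ℝ) := le_trans h2εd (Nat.le_ceil _)
    exact_mod_cast this
  have htd : t ≤ d := by
    rw [htdef]
    apply Nat.ceil_le.mpr
    nlinarith
  have htεd : (ε * d : ℝ) ≤ t := Nat.le_ceil _
  have hspos : 0 < s := by
    rw [hs]
    have : 0 < d := hd1
    positivity
  -- the bad set as a finset
  set Bad : Finset (Fin m → Fin d → Fin s) :=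
    Finset.univ.filter (fun f => ∃ x ∈ W, ε * d ≤ ((nbr f x ∩ nbrs f A).card : ℝ)) with hBadDef
  -- counting bound
  have hBadCount : Bad.card
      ≤ W.card * (d.choose t * ((s ^ d) ^ (m - 1) * ((n * d) ^ t * s ^ (d - t)))) := by
    have hsub : Bad ⊆ W.biUnion (fun x =>
        ((Finset.univ : Finset (Fin d)).powersetCard t).biUnion (fun T =>
          Finset.univ.filter (fun f : Fin m → Fin d → Fin s => ∀ i ∈ T, f x i ∈ nbrs f A))) := by
      intro f hf
      rw [hBadDef, Finset.mem_filter] at hf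
      obtain ⟨-, x, hxW, hcard⟩ := hf
      have hcard' : t ≤ (nbr f x ∩ nbrs f A).card := Nat.ceil_le.mpr hcard
      set S : Finset (Fin d) := Finset.univ.filter (fun i => f x i ∈ nbrs f A) with hSdef
      have hSsub : nbr f x ∩ nbrs f A ⊆ S.image (f x) := by
        intro y hy
        rw [Finset.mem_inter] at hy
        obtain ⟨hy1, hy2⟩ := hy
        rw [nbr, Finset.mem_image] at hy1
        obtain ⟨i, -, rfl⟩ := hy1
        exact Finset.mem_image.mpr ⟨i, by simp [hSdef, hy2], rfl⟩
      have hS : t ≤ S.card :=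
        le_trans hcard' (le_trans (Finset.card_le_card hSsub) Finset.card_image_le)
      obtain ⟨T, hTS, hTcard⟩ := Finset.exists_subset_card_eq hS
      refine Finset.mem_biUnion.mpr ⟨x, hxW, Finset.mem_biUnion.mpr
        ⟨T, Finset.mem_powersetCard.mpr ⟨Finset.subset_univ _, hTcard⟩,
          Finset.mem_filter.mpr ⟨Finset.mem_univ _, fun i hi => ?_⟩⟩⟩
      have := hTS hi
      rw [hSdef, Finset.mem_filter] at this
      exact this.2
    calc Bad.card ≤ _ := Finset.card_le_card hsub
      _ ≤ ∑ x ∈ W, (((Finset.univ : Finset (Fin d)).powersetCard t).biUnion (fun T =>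
          Finset.univ.filter (fun f : Fin m → Fin d → Fin s => ∀ i ∈ T, f x i ∈ nbrs f A))).card :=
        Finset.card_biUnion_le
      _ ≤ ∑ _x ∈ W, (d.choose t * ((s ^ d) ^ (m - 1) * ((n * d) ^ t * s ^ (d - t)))) := by
        apply Finset.sum_le_sum
        intro x hxW
        have hxA : x ∉ A := fun hxA => (Finset.disjoint_left.mp hAW hxA) hxW
        calc _ ≤ ∑ T ∈ (Finset.univ : Finset (Fin d)).powersetCard t,
              (Finset.univ.filter
                (fun f : Fin m → Fin d → Fin s => ∀ i ∈ T, f x i ∈ nbrs f A)).card :=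
            Finset.card_biUnion_le
          _ ≤ ∑ _T ∈ (Finset.univ : Finset (Fin d)).powersetCard t,
              ((s ^ d) ^ (m - 1) * ((n * d) ^ t * s ^ (d - t))) := by
            apply Finset.sum_le_sum
            intro T hT
            rw [Finset.mem_powersetCard] at hT
            calc _ ≤ (s ^ d) ^ (m - 1) * ((A.card * d) ^ T.card * s ^ (d - T.card)) :=
                core_count A x hxA T
              _ ≤ (s ^ d) ^ (m - 1) * ((n * d) ^ t * s ^ (d - t)) := by
                rw [hT.2]
                gcongr
          _ = d.choose t * ((s ^ d) ^ (m - 1) * ((n * d) ^ t * s ^ (d - t))) := by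
            rw [Finset.sum_const, smul_eq_mul, Finset.card_powersetCard, Finset.card_univ,
              Fintype.card_fin]
      _ = W.card * (d.choose t * ((s ^ d) ^ (m - 1) * ((n * d) ^ t * s ^ (d - t)))) := by
        rw [Finset.sum_const, smul_eq_mul]
  -- real-number bound
  have hsR1 : (1 : ℝ) ≤ (s : ℝ) := by exact_mod_cast hspos
  have hdR1 : (1 : ℝ) ≤ (d : ℝ) := by exact_mod_cast hd1
  have hnR1 : (1 : ℝ) ≤ (n : ℝ) := by exact_mod_cast hn
  have hWm : (W.card : ℝ) ≤ (m : ℝ) := by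
    have : W.card ≤ m := le_trans (Finset.card_le_univ W) (by simp)
    exact_mod_cast this
  -- m^2 ≤ 2^t
  have hm2t : (m : ℝ) ^ 2 ≤ (2 : ℝ) ^ t := by
    have hmpos : (0 : ℝ) < m := by linarith
    have h1 : (m : ℝ) = (2 : ℝ) ^ (Real.logb 2 m) := (Real.rpow_logb (by norm_num) (by norm_num) hmpos).symm
    calc (m : ℝ) ^ 2 = (2 : ℝ) ^ ((2:ℝ) * Real.logb 2 m) := by
          conv_lhs => rw [h1]
          rw [← Real.rpow_natCast ((2:ℝ) ^ (Real.logb 2 (m:ℝ))) 2,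
            ← Real.rpow_mul (by norm_num)]
          congr 1
          push_cast
          ring
      _ ≤ (2 : ℝ) ^ ((t : ℝ)) :=
          Real.rpow_le_rpow_of_exponent_le (by norm_num) (by linarith)
      _ = (2 : ℝ) ^ t := Real.rpow_natCast 2 t
  -- 2 * choose ≤ d^t
  have hchoose : 2 * d.choose t ≤ d ^ t := by
    calc 2 * d.choose t ≤ t.factorial * d.choose t := by
          apply Nat.mul_le_mul_right
          exact le_trans ht2 (Nat.self_le_factorial t)
      _ = d.descFactorial t := (Nat.descFactorial_eq_factorial_mul_choose d t).symm
      _ ≤ d ^ t := Nat.descFactorial_le_pow d t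
  have hchooseR : (d.choose t : ℝ) ≤ (d : ℝ) ^ t / 2 := by
    have : (2 : ℝ) * d.choose t ≤ (d : ℝ) ^ t := by exact_mod_cast hchoose
    linarith
  -- key numeric inequality
  have hkey : (W.card : ℝ) * (d.choose t) * (m : ℝ) < (2 : ℝ) ^ t * (d : ℝ) ^ t := by
    have hC0 : (0 : ℝ) ≤ (d.choose t : ℝ) := by positivity
    have h2t : (0 : ℝ) < (2 : ℝ) ^ t := by positivity
    have hdt : (0 : ℝ) < (d : ℝ) ^ t := by positivity
    calc (W.card : ℝ) * (d.choose t) * (m : ℝ) ≤ (m : ℝ) * (d.choose t) * (m : ℝ) := by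
          gcongr
      _ = (m : ℝ) ^ 2 * (d.choose t) := by ring
      _ ≤ (2 : ℝ) ^ t * (d.choose t) := by gcongr
      _ ≤ (2 : ℝ) ^ t * ((d : ℝ) ^ t / 2) := by gcongr
      _ < (2 : ℝ) ^ t * (d : ℝ) ^ t := by nlinarith
  -- the bound in ℝ
  have hBadR : (Bad.card : ℝ) < (s : ℝ) ^ (m * d) / m := by
    have hmpos : (0 : ℝ) < m := by linarith
    have hBR : (Bad.card : ℝ)
        ≤ (W.card : ℝ) * ((d.choose t : ℝ) * ((s : ℝ) ^ ((m - 1) * d) *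
            (((n : ℝ) * d) ^ t * (s : ℝ) ^ (d - t)))) := by
      have := hBadCount
      calc (Bad.card : ℝ) ≤ ((W.card * (d.choose t * ((s ^ d) ^ (m - 1) * ((n * d) ^ t * s ^ (d - t)))) : ℕ) : ℝ) := by
            exact_mod_cast this
        _ = _ := by push_cast [← pow_mul]; ring_nf
    have hexp : (s : ℝ) ^ (m * d) = (s : ℝ) ^ ((m - 1) * d) * (s : ℝ) ^ (d - t) * (s : ℝ) ^ t := by
      rw [← pow_add, ← pow_add]
      congr 1
      rw [add_assoc, Nat.sub_add_cancel htd, Nat.sub_one_mul, Nat.sub_add_cancel]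
      exact Nat.le_mul_of_pos_left d (by omega)
    set B : ℝ := (s : ℝ) ^ ((m - 1) * d) * (s : ℝ) ^ (d - t) with hBdef
    have hBpos : (0 : ℝ) < B := by positivity
    have hst : (s : ℝ) ^ t = ((2 : ℝ) * d) ^ t * ((n : ℝ) * d) ^ t := by
      rw [← mul_pow]
      congr 1
      rw [hs]
      push_cast
      ring
    have hndpos : (0 : ℝ) < ((n : ℝ) * d) ^ t := by positivity
    rw [lt_div_iff₀ hmpos]
    calc (Bad.card : ℝ) * m
        ≤ ((W.card : ℝ) * ((d.choose t : ℝ) * ((s : ℝ) ^ ((m - 1) * d) *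
            (((n : ℝ) * d) ^ t * (s : ℝ) ^ (d - t))))) * m := by
          gcongr
      _ = ((W.card : ℝ) * (d.choose t) * m) * (B * ((n : ℝ) * d) ^ t) := by
          rw [hBdef]; ring
      _ < ((2 : ℝ) ^ t * (d : ℝ) ^ t) * (B * ((n : ℝ) * d) ^ t) := by
          apply mul_lt_mul_of_pos_right hkey
          positivity
      _ = B * ((s : ℝ) ^ t) := by
          rw [hst, ← mul_pow]
          ring
      _ = (s : ℝ) ^ (m * d) := by rw [hexp, hBdef]
  -- identify the set ncard with Bad.card
  have hsetBad : ({f : Fin m → Fin d → Fin s |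
      ∃ x ∈ W, ε * d ≤ ((nbr f x ∩ nbrs f A).card : ℝ)}).ncard = Bad.card := by
    rw [show ({f : Fin m → Fin d → Fin s |
        ∃ x ∈ W, ε * d ≤ ((nbr f x ∩ nbrs f A).card : ℝ)}) = ↑Bad by
      ext f; simp [hBadDef]]
    exact Set.ncard_coe_finset _
  constructor
  · rw [hsetBad]; exact hBadR
  · -- second part
    set Good : Finset (Fin m → Fin d → Fin s) :=
      Finset.univ.filter (fun f => ∀ x ∈ W, ((nbr f x ∩ nbrs f A).card : ℝ) ≤ ε * d) with hGoodDef
    have hsetGood : ({f : Fin m → Fin d → Fin s |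
        ∀ x ∈ W, ((nbr f x ∩ nbrs f A).card : ℝ) ≤ ε * d}).ncard = Good.card := by
      rw [show ({f : Fin m → Fin d → Fin s |
          ∀ x ∈ W, ((nbr f x ∩ nbrs f A).card : ℝ) ≤ ε * d}) = ↑Good by
        ext f; simp [hGoodDef]]
      exact Set.ncard_coe_finset _
    rw [hsetGood]
    have hcover : (Finset.univ : Finset (Fin m → Fin d → Fin s)) ⊆ Good ∪ Bad := by
      intro f _
      rw [Finset.mem_union, hGoodDef, hBadDef]
      by_cases h : ∀ x ∈ W, ((nbr f x ∩ nbrs f A).card : ℝ) ≤ ε * d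
      · exact Or.inl (Finset.mem_filter.mpr ⟨Finset.mem_univ _, h⟩)
      · push_neg at h
        obtain ⟨x, hxW, hx⟩ := h
        exact Or.inr (Finset.mem_filter.mpr ⟨Finset.mem_univ _, x, hxW, le_of_lt hx⟩)
    have huniv : ((Finset.univ : Finset (Fin m → Fin d → Fin s)).card : ℝ)
        = (s : ℝ) ^ (m * d) := by
      rw [Finset.card_univ, Fintype.card_fun, Fintype.card_fun]
      push_cast
      rw [← pow_mul]
      simp [mul_comm]
    have h1 : ((Finset.univ : Finset (Fin m → Fin d → Fin s)).card : ℝ)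
        ≤ (Good.card : ℝ) + (Bad.card : ℝ) := by
      have := le_trans (Finset.card_le_card hcover) (Finset.card_union_le Good Bad)
      exact_mod_cast this
    have h2 : (s : ℝ) ^ (m * d) / m ≤ (s : ℝ) ^ (m * d) / 2 := by
      apply div_le_div_of_nonneg_left (by positivity) (by norm_num) hmR
    rw [huniv] at h1
    linarith
end

section
/- Let k, r, n, m be positive integers with k ≤ n ≤ m and n > (k−1)·r. Then there exists a family F of n-element subsets of Fin m with |F| ≥ binom(m,k) / binom(n,k)² that is r-cover-free: for all pairwise distinct f₀, f₁, …, f_r ∈ F, the set f₀ is not contained in f₁ ∪ … ∪ f_r. -/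
/-!
Take a family `F` of `n`-sets, pairwise meeting in fewer than `k` points, of maximal size. It is
`r`-cover-free, since `f₀ ⊆ f₁ ∪ … ∪ f_r` would give `n = |f₀| ≤ ∑ |f₀ ∩ fᵢ| ≤ r (k - 1) < n`.
By maximality every `n`-set meets some member of `F` in at least `k` points, so double counting
gives `C(m, n) ≤ |F| C(n, k) C(m - k, n - k)`, and `C(m, n) C(n, k) = C(m, k) C(m - k, n - k)`.
-/

open Finset

section Packing

variable {α : Type*} [DecidableEq α]

def IsPacking (k n : ℕ) (F : Finset (Finset α)) : Prop :=
  (∀ f ∈ F, f.card = n) ∧ (F : Set (Finset α)).Pairwise fun f g => (f ∩ g).card < k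

theorem not_subset_biUnion_of_card_inter_lt {ι : Type*} {k : ℕ} (s : Finset ι)
    (f₀ : Finset α) (g : ι → Finset α) (hg : ∀ i ∈ s, (f₀ ∩ g i).card < k)
    (hcard : (k - 1) * s.card < f₀.card) : ¬ f₀ ⊆ s.biUnion g := by
  intro hsub
  have hcover : f₀ ⊆ s.biUnion fun i => f₀ ∩ g i := fun x hx => by
    obtain ⟨i, hi, hxi⟩ := mem_biUnion.1 (hsub hx)
    exact mem_biUnion.2 ⟨i, hi, mem_inter.2 ⟨hx, hxi⟩⟩
  have := (card_le_card hcover).trans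
    (card_biUnion_le_card_mul s _ (k - 1) fun i hi => Nat.le_pred_of_lt (hg i hi))
  rw [mul_comm] at this
  omega

theorem IsPacking.insert {k n : ℕ} {F : Finset (Finset α)} (hF : IsPacking k n F)
    {A : Finset α} (hA : A.card = n) (hAF : ∀ f ∈ F, (A ∩ f).card < k) :
    IsPacking k n (insert A F) := by
  refine ⟨fun f hf => ?_, ?_⟩
  · rcases mem_insert.1 hf with rfl | hf
    exacts [hA, hF.1 f hf]
  · rw [coe_insert, Set.pairwise_insert]
    exact ⟨hF.2, fun f hf _ => ⟨hAF f hf, inter_comm A f ▸ hAF f hf⟩⟩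

theorem exists_isPacking_forall_exists_le_card_inter [Fintype α] {k n : ℕ} (hkn : k ≤ n) :
    ∃ F : Finset (Finset α), IsPacking k n F ∧
      ∀ A : Finset α, A.card = n → ∃ f ∈ F, k ≤ (A ∩ f).card := by
  classical
  obtain ⟨F, hF, hFmax⟩ :=
    exists_max_image ((univ : Finset (Finset (Finset α))).filter (IsPacking k n)) card
      ⟨∅, mem_filter.2 ⟨mem_univ _, by simp [IsPacking]⟩⟩
  replace hF := (mem_filter.1 hF).2
  refine ⟨F, hF, fun A hA => ?_⟩
  by_cases hAF : A ∈ F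
  · exact ⟨A, hAF, by rwa [inter_self, hA]⟩
  by_contra! hlt
  have := hFmax _ (mem_filter.2 ⟨mem_univ _, hF.insert hA hlt⟩)
  rw [card_insert_of_notMem hAF] at this
  omega

end Packing

section Counting

variable {α : Type*} [DecidableEq α] [Fintype α]

theorem card_filter_superset_le (S : Finset α) (n : ℕ) :
    (univ.filter fun A : Finset α => A.card = n ∧ S ⊆ A).card
      ≤ (Fintype.card α - S.card).choose (n - S.card) := by
  have hsub : (univ.filter fun A : Finset α => A.card = n ∧ S ⊆ A) ⊆
      ((univ \ S).powersetCard (n - S.card)).image (S ∪ ·) := by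
    intro A hA
    obtain ⟨hAn, hSA⟩ := (mem_filter.1 hA).2
    refine mem_image.2 ⟨A \ S, mem_powersetCard.2 ⟨sdiff_subset_sdiff (subset_univ A) le_rfl, ?_⟩,
      union_sdiff_of_subset hSA⟩
    rw [card_sdiff_of_subset hSA, hAn]
  calc _ ≤ _ := card_le_card hsub
    _ ≤ _ := card_image_le
    _ = _ := by rw [card_powersetCard, card_univ_sdiff]

theorem choose_le_card_mul_of_forall_exists_le_card_inter {k n : ℕ} {F : Finset (Finset α)}
    (hF : ∀ f ∈ F, f.card = n) (hmax : ∀ A : Finset α, A.card = n → ∃ f ∈ F, k ≤ (A ∩ f).card) :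
    (Fintype.card α).choose n
      ≤ F.card * (n.choose k * (Fintype.card α - k).choose (n - k)) := by
  set supersets := fun S : Finset α => univ.filter fun A : Finset α => A.card = n ∧ S ⊆ A
  have hcover : powersetCard n (univ : Finset α) ⊆
      F.biUnion fun f => (f.powersetCard k).biUnion supersets := by
    intro A hA
    have hAn := (mem_powersetCard.1 hA).2
    obtain ⟨f, hf, hkf⟩ := hmax A hAn
    obtain ⟨S, hS, hScard⟩ := exists_subset_card_eq hkf
    refine mem_biUnion.2 ⟨f, hf, mem_biUnion.2 ⟨S, ?_, ?_⟩⟩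
    · exact mem_powersetCard.2 ⟨hS.trans inter_subset_right, hScard⟩
    · exact mem_filter.2 ⟨mem_univ _, hAn, hS.trans inter_subset_left⟩
  calc (Fintype.card α).choose n = (powersetCard n (univ : Finset α)).card := by
        rw [card_powersetCard, card_univ]
    _ ≤ _ := card_le_card hcover
    _ ≤ _ := card_biUnion_le_card_mul _ _ _ fun f hf => by
        calc _ ≤ (f.powersetCard k).card * (Fintype.card α - k).choose (n - k) :=
              card_biUnion_le_card_mul _ _ _ fun S hS =>
                (mem_powersetCard.1 hS).2 ▸ card_filter_superset_le S n
          _ = _ := by rw [card_powersetCard, hF f hf]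

end Counting

theorem Nat.choose_div_choose_sq_le {m n k c : ℕ} (hkn : k ≤ n) (hnm : n ≤ m)
    (h : m.choose n ≤ c * (n.choose k * (m - k).choose (n - k))) :
    (m.choose k : ℝ) / (n.choose k : ℝ) ^ 2 ≤ c := by
  have hpos : 0 < (m - k).choose (n - k) := Nat.choose_pos (Nat.sub_le_sub_right hnm k)
  have hnat : m.choose k ≤ c * n.choose k ^ 2 := by
    refine Nat.le_of_mul_le_mul_right ?_ hpos
    calc m.choose k * (m - k).choose (n - k) = m.choose n * n.choose k :=
          (Nat.choose_mul hkn).symm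
      _ ≤ c * (n.choose k * (m - k).choose (n - k)) * n.choose k := Nat.mul_le_mul_right _ h
      _ = c * n.choose k ^ 2 * (m - k).choose (n - k) := by ring
  rw [div_le_iff₀ (by have := Nat.choose_pos hkn; positivity)]
  exact_mod_cast hnat

theorem stmt_15_general (k r n m : ℕ) (hkn : k ≤ n) (hnm : n ≤ m)
    (hcov : (k - 1) * r < n) :
    ∃ F : Finset (Finset (Fin m)),
      (∀ f ∈ F, f.card = n) ∧
      ((Nat.choose m k : ℝ) / (Nat.choose n k : ℝ) ^ 2 ≤ (F.card : ℝ)) ∧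
      (∀ f₀ ∈ F, ∀ g : Fin r → Finset (Fin m),
        (∀ i, g i ∈ F) → (∀ i, g i ≠ f₀) → (∀ i j, i ≠ j → g i ≠ g j) →
        ¬ f₀ ⊆ Finset.univ.biUnion g) := by
  obtain ⟨F, hF, hmax⟩ := exists_isPacking_forall_exists_le_card_inter (α := Fin m) hkn
  refine ⟨F, hF.1, ?_, fun f₀ hf₀ g hg hgf₀ _ => ?_⟩
  · have := choose_le_card_mul_of_forall_exists_le_card_inter hF.1 hmax
    rw [Fintype.card_fin] at this
    exact Nat.choose_div_choose_sq_le hkn hnm this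
  · refine not_subset_biUnion_of_card_inter_lt univ f₀ g
      (fun i _ => hF.2 hf₀ (hg i) (hgf₀ i).symm) ?_
    rwa [card_univ, Fintype.card_fin, hF.1 f₀ hf₀]

theorem stmt_15 (k r n m : ℕ) (hk : 0 < k) (hr : 0 < r) (hkn : k ≤ n) (hnm : n ≤ m)
    (hcov : (k - 1) * r < n) :
    ∃ F : Finset (Finset (Fin m)),
      (∀ f ∈ F, f.card = n) ∧
      ((Nat.choose m k : ℝ) / (Nat.choose n k : ℝ) ^ 2 ≤ (F.card : ℝ)) ∧
      (∀ f₀ ∈ F, ∀ g : Fin r → Finset (Fin m),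
        (∀ i, g i ∈ F) → (∀ i, g i ≠ f₀) → (∀ i j, i ≠ j → g i ≠ g j) →
        ¬ f₀ ⊆ Finset.univ.biUnion g) :=
  stmt_15_general k r n m hkn hnm hcov
end
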